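/- arXiv:2504.20785 — 4 statements merged into one kernel-verified Lean document; each statement's English description precedes it below -/
import Mathlib

section
/- Let G be a finite 2-group generated by a₁, a₂, a₃ such that c₂₃ = [a₂,a₃] lies in G₃ (the third term of the lower central series). Then c₁₂₃ ≡ c₁₃₂ modulo G₄, where c_{ijℓ} = [[a_i,a_j],a_ℓ]. -/
/-- The commutator `[x,y] = x⁻¹y⁻¹xy`. -/
def commu {G : Type*} [Group G] (x y : G) : G := x⁻¹ * y⁻¹ * x * y

/-!
Pass to `Q = G ⧸ G₄`, a group of class at most 3: there `G₃` is central and, by the three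
subgroups lemma, `G₂` is abelian. Expanding `[a₁, a₂a₃]` and `[a₁, a₃a₂]` gives
`c₁₃ c₁₂ c₁₂₃` and `c₁₂ c₁₃ c₁₃₂`. Since `a₂a₃ = a₃a₂ c₂₃` with `c₂₃ ∈ G₃` central, the two
commutators agree, and cancelling the commuting factors `c₁₂, c₁₃ ∈ G₂` leaves `c₁₂₃ = c₁₃₂`.

Mathlib indexes from `0`: `(⊤ : Subgroup G).lowerCentralSeries n` is `G_{n+1}`.
-/

open Subgroup
open scoped commutatorElement

section Commu

variable {G : Type*} [Group G]

lemma commu_eq_commutatorElement (x y : G) : commu x y = ⁅x⁻¹, y⁻¹⁆ := by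
  simp [commu, commutatorElement_def]

lemma map_commu {H : Type*} [Group H] (f : G →* H) (x y : G) :
    f (commu x y) = commu (f x) (f y) := by
  simp [commu]

lemma commu_mem_commutator {H K : Subgroup G} {x y : G} (hx : x ∈ H) (hy : y ∈ K) :
    commu x y ∈ ⁅H, K⁆ := by
  rw [commu_eq_commutatorElement]
  exact commutator_mem_commutator (inv_mem hx) (inv_mem hy)

lemma commu_mul_right (x y z : G) :
    commu x (y * z) = commu x z * commu x y * commu (commu x y) z := by
  simp only [commu]
  group

lemma commu_mul_right_of_mem_center (x y : G) {z : G} (hz : z ∈ center G) :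
    commu x (y * z) = commu x y := by
  have hconj := mem_center_iff.mp hz (y⁻¹ * x * y)
  calc commu x (y * z) = x⁻¹ * z⁻¹ * ((y⁻¹ * x * y) * z) := by simp only [commu]; group
    _ = x⁻¹ * z⁻¹ * (z * (y⁻¹ * x * y)) := by rw [hconj]
    _ = commu x y := by simp only [commu]; group

lemma mul_eq_mul_commu (y z : G) : y * z = z * y * commu y z := by
  simp only [commu]
  group

end Commu

section LowerCentralSeries

variable {G : Type*} [Group G]

lemma map_mem_lowerCentralSeries {H : Type*} [Group H] (f : G →* H) {n : ℕ} {x : G}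
    (hx : x ∈ (⊤ : Subgroup G).lowerCentralSeries n) :
    f x ∈ (⊤ : Subgroup H).lowerCentralSeries n := by
  have hfx := mem_map_of_mem f hx
  rw [map_lowerCentralSeries] at hfx
  exact lowerCentralSeries_mono n le_top hfx

lemma top_lowerCentralSeries_quotient_eq_bot (n : ℕ) :
    (⊤ : Subgroup (G ⧸ (⊤ : Subgroup G).lowerCentralSeries n)).lowerCentralSeries n = ⊥ := by
  rw [← map_top_of_surjective _ (QuotientGroup.mk'_surjective _), ← map_lowerCentralSeries,
    QuotientGroup.map_mk'_self]

lemma lowerCentralSeries_two_le_center_of_three_eq_bot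
    (hG : (⊤ : Subgroup G).lowerCentralSeries 3 = ⊥) :
    (⊤ : Subgroup G).lowerCentralSeries 2 ≤ center G :=
  commutator_top_right_eq_bot_iff_le_center.mp hG

lemma lowerCentralSeries_one_le_centralizer_of_three_eq_bot
    (hG : (⊤ : Subgroup G).lowerCentralSeries 3 = ⊥) :
    (⊤ : Subgroup G).lowerCentralSeries 1 ≤
      centralizer ((⊤ : Subgroup G).lowerCentralSeries 1 : Set G) := by
  rw [← commutator_eq_bot_iff_le_centralizer]
  nth_rw 1 [Subgroup.lowerCentralSeries_succ, Subgroup.lowerCentralSeries_zero]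
  refine commutator_commutator_eq_bot_of_rotate ?_ hG
  rwa [commutator_comm _ ((⊤ : Subgroup G).lowerCentralSeries 1),
    ← Subgroup.lowerCentralSeries_succ, ← Subgroup.lowerCentralSeries_succ]

theorem commu_right_comm_of_lowerCentralSeries_three_eq_bot
    (hG : (⊤ : Subgroup G).lowerCentralSeries 3 = ⊥) (y₁ y₂ y₃ : G)
    (h23 : commu y₂ y₃ ∈ (⊤ : Subgroup G).lowerCentralSeries 2) :
    commu (commu y₁ y₂) y₃ = commu (commu y₁ y₃) y₂ := by
  have hcomm : commu y₁ y₃ * commu y₁ y₂ = commu y₁ y₂ * commu y₁ y₃ :=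
    mem_centralizer_iff.mp (lowerCentralSeries_one_le_centralizer_of_three_eq_bot hG
      (commu_mem_commutator (mem_top y₁) (mem_top y₂))) _
      (commu_mem_commutator (mem_top y₁) (mem_top y₃))
  have hswap : commu y₁ (y₂ * y₃) = commu y₁ (y₃ * y₂) := by
    rw [mul_eq_mul_commu y₂ y₃, commu_mul_right_of_mem_center _ _
      (lowerCentralSeries_two_le_center_of_three_eq_bot hG h23)]
  rw [commu_mul_right, commu_mul_right, hcomm] at hswap
  exact mul_left_cancel hswap

end LowerCentralSeries

theorem c123_eq_c132_mod_G4_general {G : Type*} [Group G] (a₁ a₂ a₃ : G)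
    (h23 : commu a₂ a₃ ∈ (⊤ : Subgroup G).lowerCentralSeries 2) :
    commu (commu a₁ a₂) a₃ * (commu (commu a₁ a₃) a₂)⁻¹ ∈ (⊤ : Subgroup G).lowerCentralSeries 3 := by
  let π := QuotientGroup.mk' ((⊤ : Subgroup G).lowerCentralSeries 3)
  have h23' : commu (π a₂) (π a₃) ∈ (⊤ : Subgroup _).lowerCentralSeries 2 := by
    rw [← map_commu]
    exact map_mem_lowerCentralSeries π h23
  have hQ := commu_right_comm_of_lowerCentralSeries_three_eq_bot
    (top_lowerCentralSeries_quotient_eq_bot 3) (π a₁) (π a₂) (π a₃) h23'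
  rw [← QuotientGroup.eq_one_iff, ← QuotientGroup.mk'_apply, map_mul, map_inv, map_commu,
    map_commu, map_commu, map_commu, hQ, mul_inv_cancel]

theorem c123_eq_c132_mod_G4 {G : Type*} [Group G] [Finite G]
    (hG : IsPGroup 2 G) (a₁ a₂ a₃ : G)
    (hgen : Subgroup.closure {a₁, a₂, a₃} = ⊤)
    (h23 : commu a₂ a₃ ∈ (⊤ : Subgroup G).lowerCentralSeries 2) :
    commu (commu a₁ a₂) a₃ * (commu (commu a₁ a₃) a₂)⁻¹ ∈ (⊤ : Subgroup G).lowerCentralSeries 3 :=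
  c123_eq_c132_mod_G4_general a₁ a₂ a₃ h23
end

section
/- Let G be a finite 2-group with G/G₂ ≅ (Z/2)³, generated by a₁, a₂, a₃, with G₂/G₃ ≅ (Z/2)² and G₃ = ⟨c₁₂², c₁₃², G₄⟩ where c₁ⱼ = [a₁,a_j]. Then G'/G'' ≅ Z/2^m × Z/2^n for some positive integers m, n. -/
section FiniteAbelian

variable {p : ℕ} [Fact p.Prime]

theorem range_powMonoidHom_pi {ι : Type*} (A : ι → Type*) [∀ i, CommGroup (A i)] (n : ℕ) :
    (powMonoidHom n : ((i : ι) → A i) →* _).range =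
      Subgroup.pi Set.univ fun i => (powMonoidHom n : A i →* A i).range := by
  ext x
  simp only [MonoidHom.mem_range, powMonoidHom_apply, Subgroup.mem_pi, Set.mem_univ,
    true_implies, funext_iff, Pi.pow_apply]
  exact ⟨fun ⟨y, hy⟩ i => ⟨y i, hy i⟩, Classical.skolem.mp⟩

theorem Subgroup.index_pi_univ {ι : Type*} [Fintype ι] {G : ι → Type*} [∀ i, Group (G i)]
    (H : ∀ i, Subgroup (G i)) : (Subgroup.pi Set.univ H).index = ∏ i, (H i).index := by
  simp_rw [Subgroup.index, ← Nat.card_pi]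
  refine Nat.card_congr
    ((Quotient.congrRight fun x y => ?_).trans (Setoid.piQuotientEquiv _).symm)
  rw [QuotientGroup.leftRel_pi]

theorem index_range_powMonoidHom_pi_zmod_pow {ι : Type*} [Fintype ι] {e : ι → ℕ}
    (he : ∀ i, 0 < e i) :
    (powMonoidHom p : ((i : ι) → Multiplicative (ZMod (p ^ e i))) →* _).range.index =
      p ^ Fintype.card ι := by
  rw [range_powMonoidHom_pi, Subgroup.index_pi_univ]
  simp [IsCyclic.index_powMonoidHom_range, Nat.gcd_eq_right (dvd_pow_self p (he _).ne')]

theorem IsPGroup.exists_mulEquiv_pi_zmod_pow {A : Type*} [CommGroup A] [Finite A]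
    (hA : IsPGroup p A) :
    ∃ (ι : Type) (_ : Fintype ι) (e : ι → ℕ), (∀ i, 0 < e i) ∧
      Nonempty (A ≃* ((i : ι) → Multiplicative (ZMod (p ^ e i)))) := by
  classical
  obtain ⟨ι, _, n, hn, ⟨ψ⟩⟩ := CommGroup.equiv_prod_multiplicative_zmod_of_finite A
  have hpow : ∀ i, ∃ k, 0 < k ∧ n i = p ^ k := by
    intro i
    have : NeZero (n i) := ⟨by have := hn i; omega⟩
    obtain ⟨k, hk⟩ := ((hA.of_equiv ψ).of_injective (MonoidHom.mulSingle _ i)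
      (Pi.mulSingle_injective (M := fun i => Multiplicative (ZMod (n i))) i)).exists_card_eq
    simp only [Nat.card_congr Multiplicative.toAdd, Nat.card_zmod] at hk
    refine ⟨k, Nat.pos_of_ne_zero ?_, hk⟩
    rintro rfl
    exact (hn i).ne' (by simpa using hk)
  choose e he hne using hpow
  exact ⟨ι, inferInstance, e, he, ⟨ψ.trans (MulEquiv.piCongrRight fun i =>
    AddEquiv.toMultiplicative (ZMod.ringEquivCongr (hne i)).toAddEquiv)⟩⟩

theorem IsPGroup.exists_mulEquiv_pi_fin_zmod_pow {A : Type*} [CommGroup A] [Finite A]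
    (hA : IsPGroup p A) {r : ℕ} (hr : (powMonoidHom p : A →* A).range.index = p ^ r) :
    ∃ e : Fin r → ℕ, (∀ i, 0 < e i) ∧
      Nonempty (A ≃* ((i : Fin r) → Multiplicative (ZMod (p ^ e i)))) := by
  obtain ⟨ι, _, e, he, ⟨ψ⟩⟩ := hA.exists_mulEquiv_pi_zmod_pow
  have hcard : Fintype.card ι = r := by
    apply Nat.pow_right_injective (Fact.out : p.Prime).two_le
    show p ^ _ = p ^ r
    rw [← hr, ← index_range_powMonoidHom_pi_zmod_pow he, ← MulEquiv.map_range_powMonoidHom ψ,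
      Subgroup.index_map_equiv]
  let σ := Fintype.equivFinOfCardEq hcard
  exact ⟨e ∘ σ.symm, fun i => he _,
    ⟨ψ.trans { Equiv.piCongrLeft' _ σ with map_mul' := fun _ _ => rfl }⟩⟩

theorem IsPGroup.exists_mulEquiv_zmod_pow_prod {A : Type*} [CommGroup A] [Finite A]
    (hA : IsPGroup p A) (h : (powMonoidHom p : A →* A).range.index = p ^ 2) :
    ∃ m n : ℕ, 0 < m ∧ 0 < n ∧
      Nonempty (A ≃* Multiplicative (ZMod (p ^ m) × ZMod (p ^ n))) := by
  obtain ⟨e, he, ⟨ψ⟩⟩ := hA.exists_mulEquiv_pi_fin_zmod_pow h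
  exact ⟨e 0, e 1, he 0, he 1,
    ⟨(ψ.trans { piFinTwoEquiv _ with map_mul' := fun _ _ => rfl }).trans
      (MulEquiv.prodMultiplicative _ _).symm⟩⟩

end FiniteAbelian

open scoped commutatorElement

namespace Subgroup

variable {G : Type*} [Group G] [Group.IsNilpotent G]

theorem lowerCentralSeries_eq_bot_of_le_succ {k : ℕ}
    (h : (⊤ : Subgroup G).lowerCentralSeries k ≤
      (⊤ : Subgroup G).lowerCentralSeries (k + 1)) :
    (⊤ : Subgroup G).lowerCentralSeries k = ⊥ := by
  have hle : ∀ j, (⊤ : Subgroup G).lowerCentralSeries k ≤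
      (⊤ : Subgroup G).lowerCentralSeries (k + j) := by
    intro j
    induction j with
    | zero => exact le_rfl
    | succ j ih => exact h.trans (commutator_mono ih le_rfl)
  obtain ⟨n, hn⟩ := nilpotent_iff_lowerCentralSeries.mp ‹Group.IsNilpotent G›
  exact le_bot_iff.mp
    ((hle n).trans (hn ▸ lowerCentralSeries_antitone _ (Nat.le_add_left n k)))

theorem lowerCentralSeries_le_of_le_sup_succ {N : Subgroup G} [N.Normal] {k : ℕ}
    (h : (⊤ : Subgroup G).lowerCentralSeries k ≤
      N ⊔ (⊤ : Subgroup G).lowerCentralSeries (k + 1)) :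
    (⊤ : Subgroup G).lowerCentralSeries k ≤ N := by
  have hmap : ∀ j, ((⊤ : Subgroup G).lowerCentralSeries j).map (QuotientGroup.mk' N) =
      (⊤ : Subgroup (G ⧸ N)).lowerCentralSeries j := fun j => by
    rw [map_lowerCentralSeries, ← MonoidHom.range_eq_map, QuotientGroup.range_mk']
  have hbot : (⊤ : Subgroup (G ⧸ N)).lowerCentralSeries k = ⊥ := by
    refine lowerCentralSeries_eq_bot_of_le_succ ?_
    rw [← hmap, ← hmap]
    calc _ ≤ (N ⊔ (⊤ : Subgroup G).lowerCentralSeries (k + 1)).map (QuotientGroup.mk' N) :=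
          map_mono h
      _ = _ := by rw [map_sup, QuotientGroup.map_mk'_self, bot_sup_eq]
  rwa [← hmap, map_eq_bot_iff, QuotientGroup.ker_mk'] at hbot

end Subgroup

section CommutatorPow

variable {H : Type*} [Group H]

theorem Abelianization.of_surjective : Function.Surjective (of : H →* Abelianization H) :=
  QuotientGroup.mk_surjective

variable (H) in
/-- The subgroup `H' Hⁿ` of `H`. -/
def commutatorPowSubgroup (n : ℕ) : Subgroup H :=
  (powMonoidHom n : Abelianization H →* Abelianization H).range.comap Abelianization.of

variable {n : ℕ}

theorem pow_mem_commutatorPowSubgroup (y : H) : y ^ n ∈ commutatorPowSubgroup H n :=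
  ⟨Abelianization.of y, (map_pow _ _ _).symm⟩

theorem commutatorPowSubgroup_le {L : Subgroup H} (hc : commutator H ≤ L)
    (hpow : ∀ y : H, y ^ n ∈ L) : commutatorPowSubgroup H n ≤ L := by
  rintro x ⟨a, ha⟩
  obtain ⟨y, rfl⟩ := Abelianization.of_surjective a
  have hker : (y ^ n)⁻¹ * x ∈ commutator H := by
    rw [← Abelianization.ker_of, MonoidHom.mem_ker, map_mul, map_inv, map_pow, ← ha]
    exact inv_mul_cancel _
  simpa using L.mul_mem (hpow y) (hc hker)

instance commutatorPowSubgroup_characteristic : (commutatorPowSubgroup H n).Characteristic := by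
  refine Subgroup.characteristic_iff_le_comap.mpr fun φ x ⟨a, ha⟩ =>
    ⟨Abelianization.map φ.toMonoidHom a, ?_⟩
  simp only [powMonoidHom_apply] at ha ⊢
  rw [← map_pow, ha, Abelianization.map_of]

theorem index_commutatorPowSubgroup :
    (commutatorPowSubgroup H n).index =
      (powMonoidHom n : Abelianization H →* Abelianization H).range.index :=
  Subgroup.index_comap_of_surjective _ Abelianization.of_surjective

end CommutatorPow

section DerivedSubgroup

variable {G : Type*} [Group G]

theorem commu_mem_commutator_s11 (x y : G) : commu x y ∈ commutator G := by
  rw [show commu x y = ⁅x⁻¹, y⁻¹⁆ by simp [commu, commutatorElement_def]]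
  exact Subgroup.commutator_mem_commutator (Subgroup.mem_top _) (Subgroup.mem_top _)

theorem commutator_commutator_le_subgroupOf :
    commutator (commutator G) ≤
      ((⊤ : Subgroup G).lowerCentralSeries 2).subgroupOf (commutator G) := by
  rw [Subgroup.subgroupOf, ← Subgroup.map_le_iff_le_comap, Subgroup.map_subtype_commutator]
  exact Subgroup.commutator_mono le_rfl le_top

-- `(⊤ : Subgroup G).lowerCentralSeries k` is `G_{k+1}` in the numbering `G₁ = G`.
theorem lowerCentralSeries_two_subgroupOf_eq [Group.IsNilpotent G] {n : ℕ} {S : Set G}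
    (hS : S ⊆ (· ^ n) '' (commutator G : Set G))
    (hgen : (⊤ : Subgroup G).lowerCentralSeries 2 ≤
      Subgroup.closure (S ∪ (⊤ : Subgroup G).lowerCentralSeries 3))
    (hpow : ∀ x : commutator G, x ^ n ∈
      ((⊤ : Subgroup G).lowerCentralSeries 2).subgroupOf (commutator G)) :
    ((⊤ : Subgroup G).lowerCentralSeries 2).subgroupOf (commutator G) =
      commutatorPowSubgroup (commutator G) n := by
  have hN : (⊤ : Subgroup G).lowerCentralSeries 2 ≤
      (commutatorPowSubgroup (commutator G) n).map (commutator G).subtype := by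
    refine Subgroup.lowerCentralSeries_le_of_le_sup_succ (hgen.trans ?_)
    rw [Subgroup.closure_union, Subgroup.closure_eq]
    refine sup_le_sup_right (Subgroup.closure_le _ |>.mpr ?_) _
    rintro _ hs
    obtain ⟨c, hc, rfl⟩ := hS hs
    exact ⟨⟨c, hc⟩ ^ n, pow_mem_commutatorPowSubgroup _, rfl⟩
  refine le_antisymm (fun x hx => ?_)
    (commutatorPowSubgroup_le commutator_commutator_le_subgroupOf hpow)
  obtain ⟨y, hy, hyx⟩ := hN hx
  rwa [← Subtype.ext hyx]

end DerivedSubgroup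

theorem derived_mod_second_derived_of_G3_two_gen_general {G : Type*} [Group G] [Finite G]
    (hG : IsPGroup 2 G) (a₁ a₂ a₃ : G)
    (h2 : Nonempty ((Subgroup.lowerCentralSeries (⊤ : Subgroup G) 1 ⧸
      (Subgroup.lowerCentralSeries (⊤ : Subgroup G) 2).subgroupOf (Subgroup.lowerCentralSeries (⊤ : Subgroup G) 1)) ≃*
      Multiplicative (ZMod 2 × ZMod 2)))
    (h3 : Subgroup.lowerCentralSeries (⊤ : Subgroup G) 2 =
      Subgroup.closure ({(commu a₁ a₂) ^ 2, (commu a₁ a₃) ^ 2} ∪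
        (Subgroup.lowerCentralSeries (⊤ : Subgroup G) 3 : Set G))) :
    ∃ m n : ℕ, 0 < m ∧ 0 < n ∧
      Nonempty (Abelianization (Subgroup.lowerCentralSeries (⊤ : Subgroup G) 1 : Subgroup G) ≃*
        Multiplicative (ZMod (2 ^ m) × ZMod (2 ^ n))) := by
  have := hG.isNilpotent
  rw [Subgroup.top_lowerCentralSeries_one] at h2 ⊢
  obtain ⟨φ⟩ := h2
  have hsq : ∀ x : commutator G,
      x ^ 2 ∈ ((⊤ : Subgroup G).lowerCentralSeries 2).subgroupOf (commutator G) := fun x =>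
    (QuotientGroup.eq_one_iff _).mp <| φ.injective <| by
      rw [QuotientGroup.mk_pow, map_pow, map_one]
      exact (by decide : ∀ y : Multiplicative (ZMod 2 × ZMod 2), y ^ 2 = 1) _
  have hL := lowerCentralSeries_two_subgroupOf_eq
    (by rintro _ (rfl | rfl) <;> exact ⟨_, commu_mem_commutator_s11 _ _, rfl⟩) h3.le hsq
  have hindex : (powMonoidHom 2 : Abelianization (commutator G) →* _).range.index = 2 ^ 2 := by
    rw [← index_commutatorPowSubgroup, ← hL, Subgroup.index, Nat.card_congr φ.toEquiv,
      Nat.card_eq_fintype_card]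
    rfl
  exact ((hG.to_subgroup _).to_quotient _).exists_mulEquiv_zmod_pow_prod hindex

theorem derived_mod_second_derived_of_G3_two_gen {G : Type*} [Group G] [Finite G]
    (hG : IsPGroup 2 G) (a₁ a₂ a₃ : G)
    (hgen : Subgroup.closure {a₁, a₂, a₃} = ⊤)
    (h1 : Nonempty ((G ⧸ Subgroup.lowerCentralSeries (⊤ : Subgroup G) 1) ≃*
      Multiplicative (ZMod 2 × ZMod 2 × ZMod 2)))
    (h2 : Nonempty ((Subgroup.lowerCentralSeries (⊤ : Subgroup G) 1 ⧸
      (Subgroup.lowerCentralSeries (⊤ : Subgroup G) 2).subgroupOf (Subgroup.lowerCentralSeries (⊤ : Subgroup G) 1)) ≃*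
      Multiplicative (ZMod 2 × ZMod 2)))
    (h3 : Subgroup.lowerCentralSeries (⊤ : Subgroup G) 2 =
      Subgroup.closure ({(commu a₁ a₂) ^ 2, (commu a₁ a₃) ^ 2} ∪
        (Subgroup.lowerCentralSeries (⊤ : Subgroup G) 3 : Set G))) :
    ∃ m n : ℕ, 0 < m ∧ 0 < n ∧
      Nonempty (Abelianization (Subgroup.lowerCentralSeries (⊤ : Subgroup G) 1 : Subgroup G) ≃*
        Multiplicative (ZMod (2 ^ m) × ZMod (2 ^ n))) :=
  derived_mod_second_derived_of_G3_two_gen_general hG a₁ a₂ a₃ h2 h3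
end

section
/- Let G be a finite 2-group with G/G' elementary abelian. Then for every j, the quotient G_j/G_{j+1} of consecutive terms of the lower central series is elementary abelian (possibly trivial). -/
/-!
Let `n` be an exponent of `G/G₂`. By induction on `j`, `x ∈ G_j` implies `x ^ n ∈ G_{j+1}`.
For the inductive step, the image of `G_{j+1}` in `G/G_{j+2}` is central, so there
`⁅p, q⁆ ^ n = ⁅p ^ n, q⁆`, which vanishes because `p ^ n ∈ G_{j+1}` whenever `p ∈ G_j`.
A central subgroup generated by elements of exponent `n` has exponent `n`, and `G_{j+1}` is
generated by such commutators. Commutativity of `G_j/G_{j+1}` is just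
`⁅G_j, G_j⁆ ≤ ⁅G_j, G⁆ = G_{j+1}`.
-/

open scoped commutatorElement
open Subgroup QuotientGroup

section

variable {G : Type*} [Group G]

theorem commutatorElement_pow_left {a b : G} (h : Commute a ⁅a, b⁆) (n : ℕ) :
    ⁅a ^ n, b⁆ = ⁅a, b⁆ ^ n := by
  induction n with
  | zero => simp
  | succ n ih =>
    calc ⁅a ^ (n + 1), b⁆ = a * ⁅a ^ n, b⁆ * a⁻¹ * ⁅a, b⁆ := by
          simp only [commutatorElement_def, pow_succ']; group
      _ = ⁅a, b⁆ ^ (n + 1) := by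
          rw [ih, (h.pow_right n).eq, mul_inv_cancel_right, pow_succ]

theorem Subgroup.pow_eq_one_of_mem_closure {s : Set G} {n : ℕ} (hs : ∀ x ∈ s, x ^ n = 1)
    (hc : closure s ≤ center G) {x : G} (hx : x ∈ closure s) : x ^ n = 1 := by
  induction hx using closure_induction with
  | mem x hx => exact hs x hx
  | one => exact one_pow n
  | mul x y hx hy hxn hyn =>
    rw [(show Commute x y from mem_center_iff.mp (hc hy) x).mul_pow, hxn, hyn, one_mul]
  | inv x _ hxn => rw [inv_pow, hxn, inv_one]

theorem Subgroup.map_lowerCentralSeries_succ_le_center (j : ℕ) :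
    (lowerCentralSeries ⊤ (j + 1)).map (mk' (lowerCentralSeries (⊤ : Subgroup G) (j + 2))) ≤
      center _ := by
  rw [map_le_iff_le_comap, ← upperCentralSeriesStep_eq_comap_center]
  exact fun x hx y => commutator_mem_commutator hx (mem_top y)

theorem Subgroup.pow_mem_lowerCentralSeries_succ {n : ℕ}
    (hexp : ∀ x : Abelianization G, x ^ n = 1) (j : ℕ) {x : G}
    (hx : x ∈ lowerCentralSeries ⊤ j) : x ^ n ∈ lowerCentralSeries ⊤ (j + 1) := by
  induction j generalizing x with
  | zero =>
    rw [top_lowerCentralSeries_one, ← Abelianization.ker_of, MonoidHom.mem_ker, map_pow]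
    exact hexp _
  | succ j ih =>
    set π := mk' (lowerCentralSeries (⊤ : Subgroup G) (j + 2))
    have hmap : (lowerCentralSeries ⊤ (j + 1)).map π = closure
        (π '' {g | ∃ p ∈ lowerCentralSeries ⊤ j, ∃ q ∈ (⊤ : Subgroup G), ⁅p, q⁆ = g}) :=
      MonoidHom.map_closure _ _
    have hcenter := map_lowerCentralSeries_succ_le_center (G := G) j
    suffices π x ^ n = 1 by rwa [← map_pow, ← MonoidHom.mem_ker, ker_mk'] at this
    refine pow_eq_one_of_mem_closure ?_ (hmap ▸ hcenter) (hmap ▸ mem_map_of_mem π hx)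
    rintro _ ⟨_, ⟨p, hp, q, -, rfl⟩, rfl⟩
    have hpq : ⁅π p, π q⁆ ∈ center _ := map_commutatorElement π p q ▸
      hcenter (mem_map_of_mem π (commutator_mem_commutator hp (mem_top q)))
    rw [map_commutatorElement, ← commutatorElement_pow_left (mem_center_iff.mp hpq (π p)),
      ← map_pow, ← map_commutatorElement, ← MonoidHom.mem_ker, ker_mk']
    exact commutator_mem_commutator (ih hp) (mem_top q)

theorem QuotientGroup.mul_comm_of_commutator_le {H N : Subgroup G} [N.Normal] (h : ⁅H, H⁆ ≤ N)
    (x y : H ⧸ N.subgroupOf H) : x * y = y * x := by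
  have : IsMulCommutative (H ⧸ N.subgroupOf H) :=
    Normal.quotient_commutative_iff_commutator_le.mpr
      (map_le_iff_le_comap.mp (H.map_subtype_commutator.trans_le h))
  exact this.is_comm.comm x y

theorem QuotientGroup.pow_eq_one_of_forall_pow_mem {H N : Subgroup G} [N.Normal] {n : ℕ}
    (h : ∀ x ∈ H, x ^ n ∈ N) (x : H ⧸ N.subgroupOf H) : x ^ n = 1 := by
  induction x using QuotientGroup.induction_on with
  | H a => rw [← mk_pow, eq_one_iff, mem_subgroupOf, coe_pow]; exact h a a.2

end

theorem lcs_quotients_elementary_abelian_general {G : Type*} [Group G]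
    (hexp : ∀ x : Abelianization G, x ^ 2 = 1) :
    ∀ j : ℕ,
      (∀ x y : (⊤ : Subgroup G).lowerCentralSeries j ⧸
          ((⊤ : Subgroup G).lowerCentralSeries (j + 1)).subgroupOf ((⊤ : Subgroup G).lowerCentralSeries j),
        x * y = y * x) ∧
      (∀ x : (⊤ : Subgroup G).lowerCentralSeries j ⧸
          ((⊤ : Subgroup G).lowerCentralSeries (j + 1)).subgroupOf ((⊤ : Subgroup G).lowerCentralSeries j),
        x ^ 2 = 1) :=
  fun j => ⟨mul_comm_of_commutator_le (commutator_mono le_rfl le_top),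
    pow_eq_one_of_forall_pow_mem fun _ => pow_mem_lowerCentralSeries_succ hexp j⟩

theorem lcs_quotients_elementary_abelian {G : Type*} [Group G] [Finite G]
    (hG : IsPGroup 2 G)
    (hexp : ∀ x : Abelianization G, x ^ 2 = 1) :
    ∀ j : ℕ,
      (∀ x y : (⊤ : Subgroup G).lowerCentralSeries j ⧸
          ((⊤ : Subgroup G).lowerCentralSeries (j + 1)).subgroupOf ((⊤ : Subgroup G).lowerCentralSeries j),
        x * y = y * x) ∧
      (∀ x : (⊤ : Subgroup G).lowerCentralSeries j ⧸
          ((⊤ : Subgroup G).lowerCentralSeries (j + 1)).subgroupOf ((⊤ : Subgroup G).lowerCentralSeries j),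
        x ^ 2 = 1) :=
  lcs_quotients_elementary_abelian_general hexp
end

section
/- Let G be a finite 2-group generated by a₁, a₂, a₃ with G₂ = ⟨c₁₂, c₁₃, G₃⟩ where c_{ij} = [a_i, a_j], and suppose G₂/G₃ ≅ (Z/2)². If G₃ = ⟨c₁₂², c₁₃², G₄⟩, then for all j ≥ 2, G_j = ⟨c₁₂^{2^{j-2}}, c₁₃^{2^{j-2}}⟩ · G_{j+1}, and in fact G_j = G₂^{2^{j-2}} for j ≥ 2. -/
/-!
Write `γ n` for Mathlib's `(⊤ : Subgroup G).lowerCentralSeries n`, the paper's `G_{n+1}`.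
Since `G/γ 1` has exponent 2, squaring maps `γ j` into `γ (j+1)`; moreover, modulo `γ (j+2)`,
`x ↦ ⁅x, g⁆` is a homomorphism on `γ j`, and for `j ≥ 1` so is `x ↦ x²`. Hence if
`γ j = ⟨c^(2^(j-1)), d^(2^(j-1))⟩ γ (j+1)`, then `γ (j+1) = ⁅γ j, G⁆` is generated modulo `γ (j+2)`
by the `⁅c^(2^(j-1)), g⁆ ≡ ⁅c, g⁆^(2^(j-1))` and their `d`-analogues, and `⁅c, g⁆ ∈ γ 2 =
⟨c², d²⟩ γ 3` gives `γ (j+1) = ⟨c^(2^j), d^(2^j)⟩ γ (j+2)`. As `G` is nilpotent, iterating this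
expresses `γ n` through `2^(n-1)`-th powers of elements of `γ 1` alone.
-/

open scoped commutatorElement

section Identities

variable {G : Type*} [Group G]

theorem mul_sq_eq_sq_mul_commutatorElement_mul_sq (u v : G) :
    (u * v) ^ 2 = u ^ 2 * ⁅u⁻¹, v⁆ * v ^ 2 := by
  simp only [commutatorElement_def, pow_two]; group

theorem commutatorElement_sq_left (x g : G) : ⁅x ^ 2, g⁆ = ⁅x, ⁅x, g⁆⁆ * ⁅x, g⁆ ^ 2 := by
  simp only [commutatorElement_def, pow_two]; group

theorem commutatorElement_mul_left_eq (u v g : G) : ⁅u * v, g⁆ = ⁅u, ⁅v, g⁆⁆ * ⁅v, g⁆ * ⁅u, g⁆ := by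
  simp only [commutatorElement_def]; group

theorem commutatorElement_inv_left_eq (u g : G) : ⁅u⁻¹, g⁆ = ⁅u⁻¹, ⁅u, g⁆⁻¹⁆ * ⁅u, g⁆⁻¹ := by
  simp only [commutatorElement_def]; group

end Identities

namespace Subgroup

variable {G : Type*} [Group G]

theorem pow_mem_of_quotient_mulEquiv {N : Subgroup G} [N.Normal] {Q : Type*} [Group Q]
    (e : G ⧸ N ≃* Q) {k : ℕ} (hQ : ∀ q : Q, q ^ k = 1) (g : G) : g ^ k ∈ N := by
  rw [← QuotientGroup.eq_one_iff]
  exact e.injective (by rw [QuotientGroup.mk_pow, map_pow, hQ, map_one])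

theorem commutator_commutator_le_of_rotate {H₁ H₂ H₃ N : Subgroup G} [N.Normal]
    (h₁ : ⁅⁅H₂, H₃⁆, H₁⁆ ≤ N) (h₂ : ⁅⁅H₃, H₁⁆, H₂⁆ ≤ N) : ⁅⁅H₁, H₂⁆, H₃⁆ ≤ N := by
  have hbot : ∀ K : Subgroup G, K.map (QuotientGroup.mk' N) = ⊥ ↔ K ≤ N := fun K => by
    rw [map_eq_bot_iff, QuotientGroup.ker_mk']
  simp only [← hbot, map_commutator] at h₁ h₂ ⊢
  exact commutator_commutator_eq_bot_of_rotate h₁ h₂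

local notation "γ" => lowerCentralSeries (⊤ : Subgroup G)

theorem commu_mem_lowerCentralSeries_one (x y : G) : commu x y ∈ γ 1 := by
  rw [show commu x y = ⁅x⁻¹, y⁻¹⁆ by simp only [commu, commutatorElement_def, inv_inv]]
  exact commutator_mem_commutator (mem_top _) (mem_top _)

theorem commutator_lowerCentralSeries_le (m n : ℕ) : ⁅γ m, γ n⁆ ≤ γ (m + n + 1) := by
  induction n generalizing m with
  | zero => exact le_rfl
  | succ n ih =>
    rw [lowerCentralSeries_succ, commutator_comm]
    refine commutator_commutator_le_of_rotate ?_ ?_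
    · rw [commutator_comm ⊤, ← lowerCentralSeries_succ]
      exact (ih (m + 1)).trans (lowerCentralSeries_antitone _ (by omega))
    · exact commutator_mono (ih m) le_rfl

theorem commutatorElement_mem_lowerCentralSeries {a b k : ℕ} {x y : G} (hx : x ∈ γ a) (hy : y ∈ γ b)
    (hk : k ≤ a + b + 1) : ⁅x, y⁆ ∈ γ k :=
  lowerCentralSeries_antitone _ hk <|
    commutator_lowerCentralSeries_le a b (commutator_mem_commutator hx hy)

theorem commutatorElement_mem_lowerCentralSeries_succ {n : ℕ} {x : G} (hx : x ∈ γ n) (g : G) :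
    ⁅x, g⁆ ∈ γ (n + 1) :=
  commutator_mem_commutator hx (mem_top g)

theorem sq_mem_of_mem_closure {S : Set G} {n : ℕ} {K : Subgroup G} (hS : S ⊆ γ n)
    (hK : γ (2 * n + 1) ≤ K) (hsq : ∀ s ∈ S, s ^ 2 ∈ K) {u : G} (hu : u ∈ closure S) :
    u ^ 2 ∈ K := by
  have hSn : closure S ≤ γ n := closure_le _ |>.mpr hS
  induction hu using closure_induction with
  | mem s hs => exact hsq s hs
  | one => simp
  | mul u v hu hv ihu ihv =>
    rw [mul_sq_eq_sq_mul_commutatorElement_mul_sq]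
    have hcomm : ⁅u⁻¹, v⁆ ∈ γ (2 * n + 1) :=
      commutatorElement_mem_lowerCentralSeries (inv_mem (hSn hu)) (hSn hv) (by omega)
    exact mul_mem (mul_mem ihu (hK hcomm)) ihv
  | inv u _ ihu => rw [inv_pow]; exact inv_mem ihu

theorem commutator_closure_le {S : Set G} {n : ℕ} {K : Subgroup G} (hS : S ⊆ γ n)
    (hK : γ (n + 2) ≤ K) (hcomm : ∀ s ∈ S, ∀ g, ⁅s, g⁆ ∈ K) : ⁅closure S, ⊤⁆ ≤ K := by
  have hSn : closure S ≤ γ n := closure_le _ |>.mpr hS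
  refine commutator_le.mpr fun u hu g _ => ?_
  have hcomm_succ : ∀ v ∈ closure S, ⁅v, g⁆ ∈ γ (n + 1) := fun v hv =>
    commutatorElement_mem_lowerCentralSeries_succ (hSn hv) g
  induction hu using closure_induction with
  | mem s hs => exact hcomm s hs g
  | one => simp
  | mul u v _ hv ihu ihv =>
    rw [commutatorElement_mul_left_eq]
    refine mul_mem (mul_mem (hK ?_) ihv) ihu
    exact commutatorElement_mem_lowerCentralSeries (a := 0) (mem_top u) (hcomm_succ v hv) (by omega)
  | inv u hu ihu =>
    rw [commutatorElement_inv_left_eq]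
    refine mul_mem (hK ?_) (inv_mem ihu)
    exact commutatorElement_mem_lowerCentralSeries (a := 0) (mem_top _)
      (inv_mem (hcomm_succ u hu)) (by omega)

theorem lowerCentralSeries_le_of_forall_le_sup [Group.IsNilpotent G] {P : Subgroup G} {n : ℕ}
    (h : ∀ m ≥ n, γ m ≤ P ⊔ γ (m + 1)) : γ n ≤ P := by
  have hsup : ∀ t, γ n ≤ P ⊔ γ (n + t) := by
    intro t
    induction t with
    | zero => exact le_sup_right
    | succ t ih =>
      calc γ n ≤ P ⊔ γ (n + t) := ih
        _ ≤ P ⊔ (P ⊔ γ (n + t + 1)) := sup_le_sup_left (h _ (by omega)) _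
        _ = P ⊔ γ (n + (t + 1)) := by rw [← sup_assoc, sup_idem, add_assoc]
  obtain ⟨N, hN⟩ := nilpotent_iff_lowerCentralSeries.mp ‹Group.IsNilpotent G›
  have hbot : γ (n + N) = ⊥ := le_bot_iff.mp (hN ▸ lowerCentralSeries_antitone _ (by omega))
  simpa [hbot] using hsup N

section

variable (hsq : ∀ g : G, g ^ 2 ∈ (⊤ : Subgroup G).lowerCentralSeries 1)
include hsq

theorem sq_mem_lowerCentralSeries_succ (j : ℕ) {x : G} (hx : x ∈ γ j) : x ^ 2 ∈ γ (j + 1) := by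
  induction j generalizing x with
  | zero => exact hsq x
  | succ j ih =>
    refine sq_mem_of_mem_closure (n := j + 1) ?_ (lowerCentralSeries_antitone _ (by omega)) ?_ hx
    · rintro _ ⟨p, hp, q, hq, rfl⟩
      exact commutator_mem_commutator hp hq
    · rintro _ ⟨p, hp, q, -, rfl⟩
      have hpq : ⁅p, ⁅p, q⁆⁆ ∈ γ (j + 2) := commutatorElement_mem_lowerCentralSeries hp
        (commutatorElement_mem_lowerCentralSeries_succ hp q) (by omega)
      rw [← mul_mem_cancel_left hpq, ← commutatorElement_sq_left]
      exact commutator_mem_commutator (ih hp) (mem_top q)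

theorem pow_two_pow_mem_lowerCentralSeries (m : ℕ) {k : ℕ} {x : G} (hx : x ∈ γ k) :
    x ^ 2 ^ m ∈ γ (m + k) := by
  induction m with
  | zero => simpa using hx
  | succ m ih =>
    rw [pow_succ, pow_mul, add_right_comm]
    exact sq_mem_lowerCentralSeries_succ hsq _ ih

end

/-- The paper's `⟨t^(2^j) : t ∈ T⟩ · G_{j+3}`. -/
def twoPowClosure (T : Set G) (j : ℕ) : Subgroup G :=
  closure ((· ^ 2 ^ j) '' T ∪ γ (j + 2))

variable {T : Set G}

theorem lowerCentralSeries_le_twoPowClosure (j : ℕ) : γ (j + 2) ≤ twoPowClosure T j :=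
  fun _ hx => subset_closure (Or.inr hx)

theorem pow_mem_twoPowClosure {t : G} (ht : t ∈ T) (j : ℕ) : t ^ 2 ^ j ∈ twoPowClosure T j :=
  subset_closure (Or.inl ⟨t, ht, rfl⟩)

theorem twoPowClosure_pair (c d : G) (j : ℕ) :
    twoPowClosure {c, d} j = closure ({c ^ 2 ^ j, d ^ 2 ^ j} ∪ (γ (j + 2) : Set G)) := by
  rw [twoPowClosure, Set.image_pair]

section

variable (hsq : ∀ g : G, g ^ 2 ∈ (⊤ : Subgroup G).lowerCentralSeries 1)
  (hT : T ⊆ (⊤ : Subgroup G).lowerCentralSeries 1)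
include hsq hT

theorem twoPowClosure_le_lowerCentralSeries (j : ℕ) : twoPowClosure T j ≤ γ (j + 1) := by
  refine closure_le _ |>.mpr (Set.union_subset ?_ (lowerCentralSeries_antitone _ (by omega)))
  rintro _ ⟨t, ht, rfl⟩
  exact pow_two_pow_mem_lowerCentralSeries hsq j (hT ht)

theorem sq_mem_twoPowClosure_succ {j : ℕ} {u : G} (hu : u ∈ twoPowClosure T j) :
    u ^ 2 ∈ twoPowClosure T (j + 1) := by
  refine sq_mem_of_mem_closure (n := j + 1)
    (subset_closure.trans (twoPowClosure_le_lowerCentralSeries hsq hT j))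
    ((lowerCentralSeries_antitone _ (by omega)).trans (lowerCentralSeries_le_twoPowClosure _)) ?_ hu
  rintro _ (⟨t, ht, rfl⟩ | hs)
  · rw [← pow_mul, ← pow_succ]
    exact pow_mem_twoPowClosure ht _
  · exact lowerCentralSeries_le_twoPowClosure _ (sq_mem_lowerCentralSeries_succ hsq _ hs)

theorem commutatorElement_pow_mem_twoPowClosure (h2 : γ 2 = twoPowClosure T 1) {y : G}
    (hy : y ∈ γ 1) (g : G) (j : ℕ) : ⁅y ^ 2 ^ j, g⁆ ∈ twoPowClosure T (j + 1) := by
  induction j with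
  | zero => simpa [← h2] using commutator_mem_commutator hy (mem_top g)
  | succ j ih =>
    have hx : y ^ 2 ^ j ∈ γ (j + 1) := pow_two_pow_mem_lowerCentralSeries hsq j hy
    rw [pow_succ, pow_mul, commutatorElement_sq_left]
    refine mul_mem (lowerCentralSeries_le_twoPowClosure _ ?_) (sq_mem_twoPowClosure_succ hsq hT ih)
    exact commutatorElement_mem_lowerCentralSeries hx
      (commutatorElement_mem_lowerCentralSeries_succ hx g) (by omega)

theorem lowerCentralSeries_succ_eq_twoPowClosure (h1 : γ 1 = twoPowClosure T 0)
    (h2 : γ 2 = twoPowClosure T 1) : ∀ j, γ (j + 1) = twoPowClosure T j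
  | 0 => h1
  | j + 1 => by
    refine le_antisymm ?_ (twoPowClosure_le_lowerCentralSeries hsq hT (j + 1))
    rw [lowerCentralSeries_succ, lowerCentralSeries_succ_eq_twoPowClosure h1 h2 j]
    refine commutator_closure_le (n := j + 1)
      (subset_closure.trans (twoPowClosure_le_lowerCentralSeries hsq hT j))
      (lowerCentralSeries_le_twoPowClosure _) ?_
    rintro _ (⟨t, ht, rfl⟩ | hs) g
    · exact commutatorElement_pow_mem_twoPowClosure hsq hT h2 (hT ht) g j
    · exact lowerCentralSeries_le_twoPowClosure _ (commutator_mem_commutator hs (mem_top g))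

theorem lowerCentralSeries_succ_eq_closure_pow [Group.IsNilpotent G]
    (hK : ∀ j, γ (j + 1) = twoPowClosure T j) (n : ℕ) :
    γ (n + 1) = closure {x | ∃ y ∈ γ 1, x = y ^ 2 ^ n} := by
  refine le_antisymm (lowerCentralSeries_le_of_forall_le_sup fun m hm => ?_) ?_
  · obtain ⟨k, rfl⟩ := Nat.exists_eq_add_of_le hm
    rw [show n + 1 + k = n + k + 1 by omega, hK]
    refine closure_le _ |>.mpr (Set.union_subset ?_ fun x hx => mem_sup_right hx)
    rintro _ ⟨t, ht, rfl⟩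
    refine mem_sup_left (subset_closure ⟨t ^ 2 ^ k, pow_mem (hT ht) _, ?_⟩)
    rw [← pow_mul, ← pow_add, add_comm]
  · refine closure_le _ |>.mpr ?_
    rintro _ ⟨y, hy, rfl⟩
    exact pow_two_pow_mem_lowerCentralSeries hsq n hy

end

end Subgroup

open Subgroup in
theorem lcs_eq_powers_general {G : Type*} [Group G] [Finite G]
    (hG : IsPGroup 2 G) (a₁ a₂ a₃ : G)
    (h1 : Nonempty ((G ⧸ (⊤ : Subgroup G).lowerCentralSeries 1) ≃*
      Multiplicative (ZMod 2 × ZMod 2 × ZMod 2)))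
    (hG2 : (⊤ : Subgroup G).lowerCentralSeries 1 =
      Subgroup.closure ({commu a₁ a₂, commu a₁ a₃} ∪ ((⊤ : Subgroup G).lowerCentralSeries 2 : Set G)))
    (h3 : (⊤ : Subgroup G).lowerCentralSeries 2 =
      Subgroup.closure ({(commu a₁ a₂) ^ 2, (commu a₁ a₃) ^ 2} ∪
        ((⊤ : Subgroup G).lowerCentralSeries 3 : Set G))) :
    ∀ n : ℕ,
      (⊤ : Subgroup G).lowerCentralSeries (n + 1) =
        Subgroup.closure ({(commu a₁ a₂) ^ 2 ^ n, (commu a₁ a₃) ^ 2 ^ n} ∪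
          ((⊤ : Subgroup G).lowerCentralSeries (n + 2) : Set G)) ∧
      (⊤ : Subgroup G).lowerCentralSeries (n + 1) =
        Subgroup.closure {x : G | ∃ y ∈ (⊤ : Subgroup G).lowerCentralSeries 1, x = y ^ 2 ^ n} := by
  have := hG.isNilpotent
  have hsq : ∀ g : G, g ^ 2 ∈ (⊤ : Subgroup G).lowerCentralSeries 1 :=
    pow_mem_of_quotient_mulEquiv h1.some (by decide)
  have hT : {commu a₁ a₂, commu a₁ a₃} ⊆ ((⊤ : Subgroup G).lowerCentralSeries 1 : Set G) :=
    Set.pair_subset (commu_mem_lowerCentralSeries_one _ _) (commu_mem_lowerCentralSeries_one _ _)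
  have hK := lowerCentralSeries_succ_eq_twoPowClosure hsq hT
    (by simpa [twoPowClosure_pair] using hG2) (by simpa [twoPowClosure_pair] using h3)
  exact fun n => ⟨(hK n).trans (twoPowClosure_pair _ _ n),
    lowerCentralSeries_succ_eq_closure_pow hsq hT hK n⟩

theorem lcs_eq_powers {G : Type*} [Group G] [Finite G]
    (hG : IsPGroup 2 G) (a₁ a₂ a₃ : G)
    (hgen : Subgroup.closure {a₁, a₂, a₃} = ⊤)
    (h1 : Nonempty ((G ⧸ (⊤ : Subgroup G).lowerCentralSeries 1) ≃*
      Multiplicative (ZMod 2 × ZMod 2 × ZMod 2)))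
    (hG2 : (⊤ : Subgroup G).lowerCentralSeries 1 =
      Subgroup.closure ({commu a₁ a₂, commu a₁ a₃} ∪ ((⊤ : Subgroup G).lowerCentralSeries 2 : Set G)))
    (h2 : Nonempty (((⊤ : Subgroup G).lowerCentralSeries 1 ⧸
      ((⊤ : Subgroup G).lowerCentralSeries 2).subgroupOf ((⊤ : Subgroup G).lowerCentralSeries 1)) ≃*
      Multiplicative (ZMod 2 × ZMod 2)))
    (h3 : (⊤ : Subgroup G).lowerCentralSeries 2 =
      Subgroup.closure ({(commu a₁ a₂) ^ 2, (commu a₁ a₃) ^ 2} ∪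
        ((⊤ : Subgroup G).lowerCentralSeries 3 : Set G))) :
    ∀ n : ℕ,
      (⊤ : Subgroup G).lowerCentralSeries (n + 1) =
        Subgroup.closure ({(commu a₁ a₂) ^ 2 ^ n, (commu a₁ a₃) ^ 2 ^ n} ∪
          ((⊤ : Subgroup G).lowerCentralSeries (n + 2) : Set G)) ∧
      (⊤ : Subgroup G).lowerCentralSeries (n + 1) =
        Subgroup.closure {x : G | ∃ y ∈ (⊤ : Subgroup G).lowerCentralSeries 1, x = y ^ 2 ^ n} :=
  lcs_eq_powers_general hG a₁ a₂ a₃ h1 hG2 h3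
end
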